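/- arXiv:2101.01552 — 3 statements merged into one kernel-verified Lean document; each statement's English description precedes it below -/
import Mathlib

section
/- Let Θ be a superchannel from A to B realized by pre-processing F ∈ CPTP(B0 → E A0) and post-processing E ∈ CPTP(E A1 → B1), i.e. Θ[N] = E ∘ N ∘ F for all linear maps N : B(A0) → B(A1). If F' ∈ CPTP(B0 → E' A0), E' ∈ CPTP(E' A1 → B1) give another realization of Θ with F, F' isometry channels, and dim E = rank(J^Θ_{A0B0}) and dim E' ≤ dim E, then dim E' = dim E and there exists a unitary channel U : E → E' with F' = U ∘ F and E' = E ∘ U⁻¹. -/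
open Matrix Kronecker BigOperators
open scoped ComplexOrder

noncomputable section

namespace Dyn

/-- The elementary map `E^{ijkl}(ρ) = ⟨i|ρ|j⟩ |k⟩⟨l|`. -/
def elemMap {A0 A1 : Type*} [DecidableEq A1] (i j : A0) (k l : A1) :
    Matrix A0 A0 ℂ →ₗ[ℂ] Matrix A1 A1 ℂ where
  toFun ρ := ρ i j • Matrix.single k l 1
  map_add' x y := by simp [Matrix.add_apply, add_smul]
  map_smul' c x := by simp [Matrix.smul_apply, smul_smul]

/-- The Choi matrix `J^N = Σ_{i,j} |i⟩⟨j| ⊗ N(|i⟩⟨j|)`. -/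
def choi {A0 A1 : Type*} [DecidableEq A0]
    (N : Matrix A0 A0 ℂ →ₗ[ℂ] Matrix A1 A1 ℂ) : Matrix (A0 × A1) (A0 × A1) ℂ :=
  Matrix.of fun p q => N (Matrix.single p.1 q.1 1) p.2 q.2

/-- Inner product of maps, `⟨N,M⟩ = Σ_{ij} tr[(N(|i⟩⟨j|))† M(|i⟩⟨j|)]`. -/
def mapInner {A0 A1 : Type*} [Fintype A0] [DecidableEq A0] [Fintype A1]
    (N M : Matrix A0 A0 ℂ →ₗ[ℂ] Matrix A1 A1 ℂ) : ℂ :=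
  ∑ i : A0, ∑ j : A0,
    Matrix.trace ((N (Matrix.single i j 1))ᴴ * M (Matrix.single i j 1))

/-- Tensor product of linear maps on matrix spaces. -/
def mapTensor {A0 A1 B0 B1 : Type*} [Fintype A0] [DecidableEq A0] [Fintype B0] [DecidableEq B0]
    (N : Matrix A0 A0 ℂ →ₗ[ℂ] Matrix A1 A1 ℂ) (M : Matrix B0 B0 ℂ →ₗ[ℂ] Matrix B1 B1 ℂ) :
    Matrix (A0 × B0) (A0 × B0) ℂ →ₗ[ℂ] Matrix (A1 × B1) (A1 × B1) ℂ where
  toFun ρ := ∑ i : A0, ∑ j : A0, ∑ k : B0, ∑ l : B0,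
      ρ (i, k) (j, l) • (N (Matrix.single i j 1) ⊗ₖ M (Matrix.single k l 1))
  map_add' x y := by
    simp [Matrix.add_apply, add_smul, Finset.sum_add_distrib]
  map_smul' c x := by
    simp [Matrix.smul_apply, smul_smul, Finset.smul_sum]

/-- Trace preserving map. -/
def IsTracePreserving {A0 A1 : Type*} [Fintype A0] [Fintype A1]
    (N : Matrix A0 A0 ℂ →ₗ[ℂ] Matrix A1 A1 ℂ) : Prop :=
  ∀ ρ : Matrix A0 A0 ℂ, (N ρ).trace = ρ.trace

/-- Completely positive map: `id_R ⊗ N` preserves positive semidefiniteness for every ancilla `R`. -/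
def IsCompletelyPositive {A0 A1 : Type*} [Fintype A0] [DecidableEq A0] [Fintype A1]
    (N : Matrix A0 A0 ℂ →ₗ[ℂ] Matrix A1 A1 ℂ) : Prop :=
  ∀ (R : Type) [Fintype R] [DecidableEq R], ∀ ρ : Matrix (R × A0) (R × A0) ℂ,
    ρ.PosSemidef → ((mapTensor (LinearMap.id (R := ℂ) (M := Matrix R R ℂ)) N) ρ).PosSemidef

/-- A quantum channel: a completely positive trace-preserving map. -/
def IsChannel {A0 A1 : Type*} [Fintype A0] [DecidableEq A0] [Fintype A1]
    (N : Matrix A0 A0 ℂ →ₗ[ℂ] Matrix A1 A1 ℂ) : Prop :=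
  IsCompletelyPositive N ∧ IsTracePreserving N

/-- The Choi matrix of a supermap `Θ`. -/
def superChoi {A0 A1 B0 B1 : Type*} [DecidableEq A1] [DecidableEq B0]
    (Θ : (Matrix A0 A0 ℂ →ₗ[ℂ] Matrix A1 A1 ℂ) → (Matrix B0 B0 ℂ →ₗ[ℂ] Matrix B1 B1 ℂ)) :
    Matrix ((A0 × A1) × (B0 × B1)) ((A0 × A1) × (B0 × B1)) ℂ :=
  Matrix.of fun p q => choi (Θ (elemMap p.1.1 q.1.1 p.1.2 q.1.2)) p.2 q.2

/-- Extension `1_R ⊗ Θ` of a supermap to bipartite input maps. -/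
def idSupertensor {A0 A1 B0 B1 : Type*} (R0 R1 : Type*)
    [Fintype R0] [DecidableEq R0] [Fintype R1] [DecidableEq R1]
    [Fintype A0] [DecidableEq A0] [Fintype A1] [DecidableEq A1]
    [Fintype B0] [DecidableEq B0]
    (Θ : (Matrix A0 A0 ℂ →ₗ[ℂ] Matrix A1 A1 ℂ) → (Matrix B0 B0 ℂ →ₗ[ℂ] Matrix B1 B1 ℂ))
    (𝒩 : Matrix (R0 × A0) (R0 × A0) ℂ →ₗ[ℂ] Matrix (R1 × A1) (R1 × A1) ℂ) :
    Matrix (R0 × B0) (R0 × B0) ℂ →ₗ[ℂ] Matrix (R1 × B1) (R1 × B1) ℂ :=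
  ∑ i0 : R0, ∑ j0 : R0, ∑ i1 : R1, ∑ j1 : R1,
  ∑ a0 : A0, ∑ b0 : A0, ∑ a1 : A1, ∑ b1 : A1,
    choi 𝒩 ((i0, a0), (i1, a1)) ((j0, b0), (j1, b1)) •
      mapTensor (elemMap i0 j0 i1 j1) (Θ (elemMap a0 b0 a1 b1))

/-- A superchannel: a linear supermap that is completely positive and takes
trace-preserving maps to trace-preserving maps. -/
def IsSuperchannel {A0 A1 B0 B1 : Type*}
    [Fintype A0] [DecidableEq A0] [Fintype A1] [DecidableEq A1]
    [Fintype B0] [DecidableEq B0] [Fintype B1]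
    (Θ : (Matrix A0 A0 ℂ →ₗ[ℂ] Matrix A1 A1 ℂ) → (Matrix B0 B0 ℂ →ₗ[ℂ] Matrix B1 B1 ℂ)) : Prop :=
  (∀ (c : ℂ) (N M : Matrix A0 A0 ℂ →ₗ[ℂ] Matrix A1 A1 ℂ), Θ (c • N + M) = c • Θ N + Θ M) ∧
  (∀ N, IsTracePreserving N → IsTracePreserving (Θ N)) ∧
  (∀ (R0 R1 : Type) [Fintype R0] [DecidableEq R0] [Fintype R1] [DecidableEq R1],
    ∀ 𝒩 : Matrix (R0 × A0) (R0 × A0) ℂ →ₗ[ℂ] Matrix (R1 × A1) (R1 × A1) ℂ,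
      IsCompletelyPositive 𝒩 → IsCompletelyPositive (idSupertensor R0 R1 Θ 𝒩))

/-- Partial trace over the first tensor factor. -/
def ptraceFst {R S : Type*} [Fintype R] (X : Matrix (R × S) (R × S) ℂ) : Matrix S S ℂ :=
  Matrix.of fun i j => ∑ r : R, X (r, i) (r, j)

/-- Partial trace over the second tensor factor. -/
def ptraceSnd {R S : Type*} [Fintype S] (X : Matrix (R × S) (R × S) ℂ) : Matrix R R ℂ :=
  Matrix.of fun i j => ∑ s : S, X (i, s) (j, s)

/-- Marginal `J_{A1B0}` of a superchannel Choi matrix. -/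
def margA1B0 {A0 A1 B0 B1 : Type*} [Fintype A0] [Fintype B1]
    (J : Matrix ((A0 × A1) × (B0 × B1)) ((A0 × A1) × (B0 × B1)) ℂ) :
    Matrix (A1 × B0) (A1 × B0) ℂ :=
  Matrix.of fun p q => ∑ i : A0, ∑ r : B1, J ((i, p.1), (p.2, r)) ((i, q.1), (q.2, r))

/-- Marginal `J_{AB0}` of a superchannel Choi matrix. -/
def margAB0 {A0 A1 B0 B1 : Type*} [Fintype B1]
    (J : Matrix ((A0 × A1) × (B0 × B1)) ((A0 × A1) × (B0 × B1)) ℂ) :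
    Matrix ((A0 × A1) × B0) ((A0 × A1) × B0) ℂ :=
  Matrix.of fun p q => ∑ r : B1, J (p.1, (p.2, r)) (q.1, (q.2, r))

/-- Marginal `J_{A0B0}` of a superchannel Choi matrix. -/
def margA0B0 {A0 A1 B0 B1 : Type*} [Fintype A1] [Fintype B1]
    (J : Matrix ((A0 × A1) × (B0 × B1)) ((A0 × A1) × (B0 × B1)) ℂ) :
    Matrix (A0 × B0) (A0 × B0) ℂ :=
  Matrix.of fun p q => ∑ k : A1, ∑ r : B1, J ((p.1, k), (p.2, r)) ((q.1, k), (q.2, r))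

/-- Partial trace over the `A` system of a matrix on `AB`. -/
def trA {A0 A1 B0 B1 : Type*} [Fintype A0] [Fintype A1]
    (X : Matrix ((A0 × A1) × (B0 × B1)) ((A0 × A1) × (B0 × B1)) ℂ) :
    Matrix (B0 × B1) (B0 × B1) ℂ :=
  Matrix.of fun b b' => ∑ a : A0 × A1, X (a, b) (a, b')

/-- The linear map with a prescribed Choi matrix. -/
def mapOfChoi {B0 B1 : Type*} [Fintype B0]
    (C : Matrix (B0 × B1) (B0 × B1) ℂ) : Matrix B0 B0 ℂ →ₗ[ℂ] Matrix B1 B1 ℂ where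
  toFun ρ := Matrix.of fun p q => ∑ m : B0, ∑ n : B0, C (m, p) (n, q) * ρ m n
  map_add' x y := by
    ext p q
    simp [Matrix.add_apply, mul_add, Finset.sum_add_distrib]
  map_smul' c x := by
    ext p q
    simp [Matrix.smul_apply, Finset.mul_sum, smul_eq_mul]
    ring_nf
    simp [Finset.mul_sum, mul_comm, mul_left_comm]

/-- The supermap determined by a Choi matrix on `AB`, acting on Choi matrices via
`R(J^N) = tr_A[J ((J^N)^T ⊗ I)]`. -/
def choiToSupermap {A0 A1 B0 B1 : Type*} [Fintype A0] [DecidableEq A0] [Fintype A1] [Fintype B0]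
    (J : Matrix ((A0 × A1) × (B0 × B1)) ((A0 × A1) × (B0 × B1)) ℂ) :
    (Matrix A0 A0 ℂ →ₗ[ℂ] Matrix A1 A1 ℂ) → (Matrix B0 B0 ℂ →ₗ[ℂ] Matrix B1 B1 ℂ) :=
  fun N => mapOfChoi (Matrix.of fun bp bq => ∑ x : A0 × A1, ∑ y : A0 × A1,
    J (x, bp) (y, bq) * choi N x y)

/-- Unnormalized maximally entangled state `φ+ = Σ_{ij} |ii⟩⟨jj|`. -/
def phiPlus (A : Type*) [DecidableEq A] : Matrix (A × A) (A × A) ℂ :=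
  Matrix.of fun p q => if p.1 = p.2 ∧ q.1 = q.2 then 1 else 0

/-- Conjugation channel `ρ ↦ V ρ V†`. -/
def conjMap {E E' : Type*} [Fintype E]
    (V : Matrix E' E ℂ) : Matrix E E ℂ →ₗ[ℂ] Matrix E' E' ℂ where
  toFun ρ := V * ρ * Vᴴ
  map_add' x y := by simp [Matrix.mul_add, Matrix.add_mul]
  map_smul' c x := by simp [Matrix.mul_smul, Matrix.smul_mul]

/-- Left inverse of an isometry channel: `σ ↦ V†σV + tr[(I − VV†)σ] τ`. -/
def invMap {E E' : Type*} [Fintype E] [Fintype E'] [DecidableEq E']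
    (V : Matrix E' E ℂ) (τ : Matrix E E ℂ) : Matrix E' E' ℂ →ₗ[ℂ] Matrix E E ℂ where
  toFun σ := Vᴴ * σ * V + (Matrix.trace ((1 - V * Vᴴ) * σ)) • τ
  map_add' x y := by
    simp only [Matrix.mul_add, Matrix.add_mul, Matrix.trace_add, add_smul]
    abel
  map_smul' c x := by
    simp [Matrix.mul_smul, Matrix.smul_mul, smul_add, smul_smul, smul_eq_mul]

/-- Dual cone (within Hermitian matrices) with respect to the Hilbert–Schmidt inner product. -/
def dualCone {n : Type*} [Fintype n] (K : Set (Matrix n n ℂ)) : Set (Matrix n n ℂ) :=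
  {W | W.IsHermitian ∧ ∀ M ∈ K, 0 ≤ (Matrix.trace (W * M)).re}

/-- Trace norm, characterized as `max_U Re tr[U X]` over unitaries. -/
def traceNorm {n : Type*} [Fintype n] [DecidableEq n] (X : Matrix n n ℂ) : ℝ :=
  sSup {y : ℝ | ∃ U ∈ Matrix.unitaryGroup n ℂ, y = (Matrix.trace ((U : Matrix n n ℂ) * X)).re}

/-- Diamond norm of a Hermitian-preserving map. -/
def diamondNorm {B0 B1 : Type*} [Fintype B0] [DecidableEq B0] [Fintype B1] [DecidableEq B1]
    (L : Matrix B0 B0 ℂ →ₗ[ℂ] Matrix B1 B1 ℂ) : ℝ :=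
  sSup {x : ℝ | ∃ v : B0 × B0 → ℂ, (∑ p : B0 × B0, Complex.normSq (v p)) = 1 ∧
    x = traceNorm ((mapTensor (LinearMap.id (R := ℂ) (M := Matrix B0 B0 ℂ)) L)
        (Matrix.of fun p q => v p * (starRingEnd ℂ) (v q)))}

/-- The monotone `f_P(N) = max_{Θ ∈ FREE} ⟨P, Θ[N]⟩`. -/
def fP {A0 A1 B0 B1 : Type*} [DecidableEq A1] [Fintype B0] [DecidableEq B0] [Fintype B1]
    (FREE : Set ((Matrix A0 A0 ℂ →ₗ[ℂ] Matrix A1 A1 ℂ) → (Matrix B0 B0 ℂ →ₗ[ℂ] Matrix B1 B1 ℂ)))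
    (P : Matrix B0 B0 ℂ →ₗ[ℂ] Matrix B1 B1 ℂ)
    (N : Matrix A0 A0 ℂ →ₗ[ℂ] Matrix A1 A1 ℂ) : ℝ :=
  sSup {x : ℝ | ∃ Θ ∈ FREE, x = (Matrix.trace ((choi P)ᴴ * choi (Θ N))).re}

/-- `g(P) = max_{M free} ⟨P, M⟩`. -/
def gP {B0 B1 : Type*} [Fintype B0] [DecidableEq B0] [Fintype B1]
    (FB : Set (Matrix B0 B0 ℂ →ₗ[ℂ] Matrix B1 B1 ℂ))
    (P : Matrix B0 B0 ℂ →ₗ[ℂ] Matrix B1 B1 ℂ) : ℝ :=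
  sSup {x : ℝ | ∃ C ∈ FB, x = (Matrix.trace ((choi P)ᴴ * choi C)).re}

/-- Replacement supermap: the superchannel that (on channels) replaces the input with `C`. -/
def replSupermap {A0 A1 B0 B1 : Type*} [Fintype A0] [DecidableEq A0] [Fintype A1]
    (C : Matrix B0 B0 ℂ →ₗ[ℂ] Matrix B1 B1 ℂ) :
    (Matrix A0 A0 ℂ →ₗ[ℂ] Matrix A1 A1 ℂ) → (Matrix B0 B0 ℂ →ₗ[ℂ] Matrix B1 B1 ℂ) :=
  fun N => ((Matrix.trace (choi N)) / (Fintype.card A0 : ℂ)) • C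

/-- Appending supermap `N ↦ N ⊗ C`. -/
def appendSupermap {A0 A1 B0 B1 : Type*} [Fintype A0] [DecidableEq A0] [Fintype B0] [DecidableEq B0]
    (C : Matrix B0 B0 ℂ →ₗ[ℂ] Matrix B1 B1 ℂ) :
    (Matrix A0 A0 ℂ →ₗ[ℂ] Matrix A1 A1 ℂ) →
      (Matrix (A0 × B0) (A0 × B0) ℂ →ₗ[ℂ] Matrix (A1 × B1) (A1 × B1) ℂ) :=
  fun N => mapTensor N C

end Dyn
end

/-!
Write `K = reshape W`, the isometry with the ancilla `E` as row index. Trace preservation of `ℰ`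
gives `J^Θ_{A0B0} = |A1| (K†K)ᵀ`, so `K` and `K'` have the same Gram matrix, `rank K = dim E`,
and `dim E = rank J ≤ rank K' ≤ dim E'`. Two families of `dim E` vectors with the same Gram matrix, one of them
independent, differ by a unitary: `K' = U K`, i.e. `W' = (U ⊗ 1) W`. Evaluating `Θ` on the
elementary maps `|i⟩⟨j| ↦ |k⟩⟨l|` shows that `ℰ` and `ℰ' ∘ Ad(U ⊗ 1)` agree on every
`K C K† ⊗ |k⟩⟨l|`, and these exhaust all inputs because `K K†` is invertible.
-/

namespace Matrix

variable {m n n' 𝕜 : Type*}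

theorem isUnit_of_rank_eq_card [Fintype n] [DecidableEq n] [Field 𝕜] {A : Matrix n n 𝕜}
    (h : A.rank = Fintype.card n) : IsUnit A :=
  linearIndependent_rows_iff_isUnit.mp <| linearIndependent_iff_card_eq_finrank_span.mpr <| by
    rw [Set.finrank, ← rank_eq_finrank_span_row, h]

theorem linearMap_ext_kronecker_single [DecidableEq n] [DecidableEq n'] [Finite n] [Finite n']
    {R M : Type*} [CommSemiring R] [AddCommMonoid M] [Module R M]
    {f g : Matrix (n × n') (n × n') R →ₗ[R] M}
    (h : ∀ (X : Matrix n n R) (k l : n'), f (X ⊗ₖ single k l 1) = g (X ⊗ₖ single k l 1)) :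
    f = g :=
  ext_linearMap R fun ⟨e, k⟩ ⟨e', l⟩ => LinearMap.ext fun c => by
    simpa [single_kronecker_single] using h (single e e' c) k l

section StarField

variable [Fintype m] [Fintype n] [DecidableEq n] [Field 𝕜] [StarRing 𝕜] {K : Matrix n m 𝕜}

theorem exists_mul_mul_conjTranspose_eq (hK : IsUnit (K * Kᴴ)) (X : Matrix n n 𝕜) :
    ∃ C : Matrix m m 𝕜, K * C * Kᴴ = X := by
  set G := K * Kᴴ
  have hG : IsUnit G.det := (isUnit_iff_isUnit_det G).mp hK
  refine ⟨Kᴴ * G⁻¹ * X * G⁻¹ * K, ?_⟩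
  calc K * (Kᴴ * G⁻¹ * X * G⁻¹ * K) * Kᴴ = G * (G⁻¹ * (X * G⁻¹ * G)) := by
        simp only [G, Matrix.mul_assoc]
    _ = X := by rw [nonsing_inv_mul_cancel_right G _ hG, mul_nonsing_inv_cancel_left G _ hG]

theorem eq_of_conjTranspose_mul_mul_eq (hK : IsUnit (K * Kᴴ)) {X Y : Matrix n n 𝕜}
    (h : Kᴴ * X * K = Kᴴ * Y * K) : X = Y := by
  set G := K * Kᴴ
  have hG : IsUnit G.det := (isUnit_iff_isUnit_det G).mp hK
  have hsandwich (Z : Matrix n n 𝕜) : Z = G⁻¹ * (K * (Kᴴ * Z * K) * Kᴴ) * G⁻¹ :=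
    calc Z = G⁻¹ * G * Z * (G * G⁻¹) := by
          rw [nonsing_inv_mul G hG, mul_nonsing_inv G hG, Matrix.one_mul, Matrix.mul_one]
      _ = G⁻¹ * (K * (Kᴴ * Z * K) * Kᴴ) * G⁻¹ := by simp only [G, Matrix.mul_assoc]
  rw [hsandwich X, hsandwich Y, h]

end StarField

section StarOrderedField

variable [Fintype m] [Fintype n] [DecidableEq n] [Field 𝕜] [PartialOrder 𝕜] [StarRing 𝕜]
  [StarOrderedRing 𝕜]

theorem isUnit_mul_conjTranspose_of_rank_eq_card {K : Matrix n m 𝕜}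
    (hK : K.rank = Fintype.card n) : IsUnit (K * Kᴴ) :=
  isUnit_of_rank_eq_card (by rw [rank_self_mul_conjTranspose, hK])

theorem exists_unitary_mul_eq_of_conjTranspose_mul_self_eq [Fintype n'] [DecidableEq n']
    {K : Matrix n m 𝕜} {K' : Matrix n' m 𝕜} (hGram : Kᴴ * K = K'ᴴ * K')
    (hK : K.rank = Fintype.card n) (hcard : Fintype.card n' = Fintype.card n) :
    ∃ U : Matrix n' n 𝕜, U * K = K' ∧ Uᴴ * U = 1 ∧ U * Uᴴ = 1 := by
  have hK' : K'.rank = Fintype.card n' := by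
    rw [← rank_conjTranspose_mul_self, ← hGram, rank_conjTranspose_mul_self, hK, hcard]
  set G' := K' * K'ᴴ
  have hG' : IsUnit G'.det :=
    (isUnit_iff_isUnit_det G').mp (isUnit_mul_conjTranspose_of_rank_eq_card hK')
  set U : Matrix n' n 𝕜 := G'⁻¹ * K' * Kᴴ
  have hUK : U * K = K' := by
    calc U * K = G'⁻¹ * (G' * K') := by simp only [U, G', Matrix.mul_assoc, hGram]
      _ = K' := nonsing_inv_mul_cancel_left G' K' hG'
  have hUU : Uᴴ * U = 1 := by
    refine eq_of_conjTranspose_mul_mul_eq (isUnit_mul_conjTranspose_of_rank_eq_card hK) ?_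
    calc Kᴴ * (Uᴴ * U) * K = (U * K)ᴴ * (U * K) := by
          simp only [conjTranspose_mul, Matrix.mul_assoc]
      _ = Kᴴ * (1 : Matrix n n 𝕜) * K := by rw [hUK, ← hGram, Matrix.mul_one]
  exact ⟨U, hUK, hUU, (mul_eq_one_comm_of_equiv (Fintype.equivOfCardEq hcard.symm)).mp hUU⟩

end StarOrderedField

end Matrix

namespace Dyn

variable {A0 A1 B0 B1 E E' : Type*}

/-- `W : B0 → E ⊗ A0` as a matrix with the ancilla `E` as its only row index. -/
def reshape (W : Matrix (E × A0) B0 ℂ) : Matrix E (A0 × B0) ℂ :=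
  of fun e p => W (e, p.1) p.2

theorem reshape_injective : Function.Injective (reshape : Matrix (E × A0) B0 ℂ → _) :=
  fun _ _ h => ext fun ⟨e, a⟩ b => congrFun (congrFun h e) (a, b)

theorem reshape_kronecker_one_mul [Fintype E] [Fintype A0] [DecidableEq A0] (U : Matrix E' E ℂ)
    (W : Matrix (E × A0) B0 ℂ) :
    reshape ((U ⊗ₖ (1 : Matrix A0 A0 ℂ)) * W) = U * reshape W := by
  ext e' ⟨a, b⟩
  simp [reshape, mul_apply, Fintype.sum_prod_type, one_apply]

theorem conjMap_apply [Fintype E] (V : Matrix E' E ℂ) (ρ : Matrix E E ℂ) :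
    conjMap V ρ = V * ρ * Vᴴ :=
  rfl

theorem conjMap_kronecker_one [Fintype E] [Fintype A1] [DecidableEq A1] (U : Matrix E' E ℂ)
    (X : Matrix E E ℂ) (Y : Matrix A1 A1 ℂ) :
    conjMap (U ⊗ₖ (1 : Matrix A1 A1 ℂ)) (X ⊗ₖ Y) = conjMap U X ⊗ₖ Y := by
  simp only [conjMap, LinearMap.coe_mk, AddHom.coe_mk, conjTranspose_kronecker,
    conjTranspose_one, ← mul_kronecker_mul, Matrix.one_mul, Matrix.mul_one]

theorem mapTensor_id_elemMap_apply [Fintype E] [DecidableEq E] [Fintype A0] [DecidableEq A0]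
    [DecidableEq A1] (i j : A0) (k l : A1) (ρ : Matrix (E × A0) (E × A0) ℂ) :
    mapTensor LinearMap.id (elemMap i j k l) ρ = ρ.submatrix (·, i) (·, j) ⊗ₖ single k l 1 := by
  ext ⟨e, k'⟩ ⟨f, l'⟩
  simp only [mapTensor, elemMap, LinearMap.coe_mk, AddHom.coe_mk, LinearMap.id_apply,
    Matrix.sum_apply, Matrix.smul_apply, kroneckerMap_apply, submatrix_apply, single_apply,
    smul_eq_mul]
  simp [ite_and, mul_ite, Finset.sum_ite_eq']

theorem submatrix_mul_single_mul_conjTranspose [Fintype B0] [DecidableEq B0] [Fintype A0]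
    [DecidableEq A0] (W : Matrix (E × A0) B0 ℂ) (i j : A0) (b b' : B0) :
    (W * single b b' (1 : ℂ) * Wᴴ).submatrix (·, i) (·, j)
      = reshape W * single (i, b) (j, b') (1 : ℂ) * (reshape W)ᴴ := by
  ext e f
  simp [reshape, mul_apply, single, ite_and]

def IsRealizedBy [Fintype E] [DecidableEq E] [Fintype A0] [DecidableEq A0] [Fintype B0]
    (Θ : (Matrix A0 A0 ℂ →ₗ[ℂ] Matrix A1 A1 ℂ) → (Matrix B0 B0 ℂ →ₗ[ℂ] Matrix B1 B1 ℂ))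
    (W : Matrix (E × A0) B0 ℂ) (ℰ : Matrix (E × A1) (E × A1) ℂ →ₗ[ℂ] Matrix B1 B1 ℂ) : Prop :=
  ∀ N, Θ N = ℰ ∘ₗ mapTensor (LinearMap.id (R := ℂ) (M := Matrix E E ℂ)) N ∘ₗ conjMap W

namespace IsRealizedBy

variable [Fintype E] [DecidableEq E] [Fintype A0] [DecidableEq A0] [DecidableEq A1] [Fintype B0]
  [DecidableEq B0]
  {Θ : (Matrix A0 A0 ℂ →ₗ[ℂ] Matrix A1 A1 ℂ) → (Matrix B0 B0 ℂ →ₗ[ℂ] Matrix B1 B1 ℂ)}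
  {W : Matrix (E × A0) B0 ℂ} {ℰ : Matrix (E × A1) (E × A1) ℂ →ₗ[ℂ] Matrix B1 B1 ℂ}

theorem apply_elemMap_single (h : IsRealizedBy Θ W ℰ) (i j : A0) (k l : A1) (b b' : B0) :
    Θ (elemMap i j k l) (single b b' (1 : ℂ))
      = ℰ ((reshape W * single (i, b) (j, b') (1 : ℂ) * (reshape W)ᴴ) ⊗ₖ single k l 1) := by
  rw [h, LinearMap.comp_apply, LinearMap.comp_apply, conjMap_apply, mapTensor_id_elemMap_apply,
    submatrix_mul_single_mul_conjTranspose]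

theorem apply_kronecker_single_eq [Fintype E'] [DecidableEq E'] (h : IsRealizedBy Θ W ℰ)
    {W' : Matrix (E' × A0) B0 ℂ} {ℰ' : Matrix (E' × A1) (E' × A1) ℂ →ₗ[ℂ] Matrix B1 B1 ℂ}
    (h' : IsRealizedBy Θ W' ℰ') (C : Matrix (A0 × B0) (A0 × B0) ℂ) (k l : A1) :
    ℰ ((reshape W * C * (reshape W)ᴴ) ⊗ₖ single k l 1)
      = ℰ' ((reshape W' * C * (reshape W')ᴴ) ⊗ₖ single k l 1) := by
  induction C using Matrix.induction_on' with
  | h_zero => simp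
  | h_add C D hC hD => simp only [Matrix.mul_add, Matrix.add_mul, add_kronecker, map_add, hC, hD]
  | h_std_basis p q x =>
    rw [show single p q x = x • single p q 1 by rw [smul_single, smul_eq_mul, mul_one]]
    simp only [Matrix.mul_smul, Matrix.smul_mul, smul_kronecker, map_smul,
      ← h.apply_elemMap_single, ← h'.apply_elemMap_single]

theorem margA0B0_superChoi [Fintype A1] [Fintype B1] (h : IsRealizedBy Θ W ℰ)
    (hℰ : IsTracePreserving ℰ) :
    margA0B0 (superChoi Θ) = (Fintype.card A1 : ℂ) • ((reshape W)ᴴ * reshape W)ᵀ := by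
  ext ⟨i, b⟩ ⟨j, b'⟩
  have htrace (k : A1) : ∑ r, Θ (elemMap i j k k) (single b b' 1) r r
      = ((reshape W)ᴴ * reshape W) (j, b') (i, b) := by
    rw [h.apply_elemMap_single]
    change trace _ = _
    rw [hℰ, trace_kronecker, trace_single_eq_same, mul_one, trace_mul_comm, ← Matrix.mul_assoc,
      trace_mul_comm, trace_single_mul, one_smul]
  simp only [margA0B0, superChoi, choi, of_apply, htrace, Finset.sum_const, Finset.card_univ,
    transpose_apply, Matrix.smul_apply, nsmul_eq_mul, smul_eq_mul]

theorem rank_margA0B0_superChoi_le [Fintype A1] [Fintype B1] (h : IsRealizedBy Θ W ℰ)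
    (hℰ : IsTracePreserving ℰ) : (margA0B0 (superChoi Θ)).rank ≤ (reshape W).rank := by
  rw [h.margA0B0_superChoi hℰ, ← Matrix.one_mul ((reshape W)ᴴ * reshape W)ᵀ, ← Matrix.smul_mul]
  exact (rank_mul_le_right _ _).trans_eq (by rw [rank_transpose, rank_conjTranspose_mul_self])

theorem eq_comp_conjMap [Fintype E'] [DecidableEq E'] [Fintype A1] (h : IsRealizedBy Θ W ℰ)
    {W' : Matrix (E' × A0) B0 ℂ} {ℰ' : Matrix (E' × A1) (E' × A1) ℂ →ₗ[ℂ] Matrix B1 B1 ℂ}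
    (h' : IsRealizedBy Θ W' ℰ') (hW : IsUnit (reshape W * (reshape W)ᴴ)) {U : Matrix E' E ℂ}
    (hU : U * reshape W = reshape W') :
    ℰ = ℰ' ∘ₗ conjMap (U ⊗ₖ (1 : Matrix A1 A1 ℂ)) := by
  refine linearMap_ext_kronecker_single fun X k l => ?_
  obtain ⟨C, rfl⟩ := exists_mul_mul_conjTranspose_eq hW X
  rw [h.apply_kronecker_single_eq h', LinearMap.comp_apply, conjMap_kronecker_one, ← hU]
  congr 2
  change _ = U * (reshape W * C * (reshape W)ᴴ) * Uᴴ
  simp only [conjTranspose_mul, Matrix.mul_assoc]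

end IsRealizedBy

end Dyn

theorem superchannel_realization_unique_general {A0 A1 B0 B1 E E' : Type*}
    [Fintype A0] [DecidableEq A0] [Fintype A1] [DecidableEq A1]
    [Fintype B0] [DecidableEq B0] [Fintype B1]
    [Fintype E] [DecidableEq E] [Fintype E'] [DecidableEq E']
    (W : Matrix (E × A0) B0 ℂ)
    (W' : Matrix (E' × A0) B0 ℂ)
    (ℰ : Matrix (E × A1) (E × A1) ℂ →ₗ[ℂ] Matrix B1 B1 ℂ) (hℰ : Dyn.IsChannel ℰ)
    (ℰ' : Matrix (E' × A1) (E' × A1) ℂ →ₗ[ℂ] Matrix B1 B1 ℂ) (hℰ' : Dyn.IsChannel ℰ')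
    (Θ : (Matrix A0 A0 ℂ →ₗ[ℂ] Matrix A1 A1 ℂ) → (Matrix B0 B0 ℂ →ₗ[ℂ] Matrix B1 B1 ℂ))
    (hreal : ∀ N, Θ N =
      ℰ ∘ₗ (Dyn.mapTensor (LinearMap.id (R := ℂ) (M := Matrix E E ℂ)) N) ∘ₗ Dyn.conjMap W)
    (hreal' : ∀ N, Θ N =
      ℰ' ∘ₗ (Dyn.mapTensor (LinearMap.id (R := ℂ) (M := Matrix E' E' ℂ)) N) ∘ₗ Dyn.conjMap W')
    (hcard : Fintype.card E = (Dyn.margA0B0 (Dyn.superChoi Θ)).rank)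
    (hle : Fintype.card E' ≤ Fintype.card E) :
    Fintype.card E' = Fintype.card E ∧
    ∃ U : Matrix E' E ℂ, Uᴴ * U = 1 ∧ U * Uᴴ = 1 ∧
      (∀ ρ : Matrix B0 B0 ℂ,
        Dyn.conjMap W' ρ =
          (U ⊗ₖ (1 : Matrix A0 A0 ℂ)) * (Dyn.conjMap W ρ) * (U ⊗ₖ (1 : Matrix A0 A0 ℂ))ᴴ) ∧
      (∀ σ : Matrix (E' × A1) (E' × A1) ℂ,
        ℰ' σ = ℰ ((U ⊗ₖ (1 : Matrix A1 A1 ℂ))ᴴ * σ * (U ⊗ₖ (1 : Matrix A1 A1 ℂ)))) := by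
  have h : Dyn.IsRealizedBy Θ W ℰ := hreal
  have h' : Dyn.IsRealizedBy Θ W' ℰ' := hreal'
  set K := Dyn.reshape W
  set K' := Dyn.reshape W'
  have hK : K.rank = Fintype.card E :=
    le_antisymm (rank_le_card_height K) (hcard ▸ h.rank_margA0B0_superChoi_le hℰ.2)
  have hcard' : Fintype.card E' = Fintype.card E :=
    le_antisymm hle <| hcard ▸ (h'.rank_margA0B0_superChoi_le hℰ'.2).trans (rank_le_card_height K')
  have hGram : Kᴴ * K = K'ᴴ * K' := by
    rcases isEmpty_or_nonempty A1 with _ | _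
    · -- without `A1` the marginal vanishes, so both ancillas are empty
      have : IsEmpty E := Fintype.card_eq_zero_iff.mp <| by
        rw [hcard, h.margA0B0_superChoi hℰ.2, Fintype.card_eq_zero, Nat.cast_zero, zero_smul,
          rank_zero]
      have : IsEmpty E' := Fintype.card_eq_zero_iff.mp (hcard'.trans Fintype.card_eq_zero)
      ext p q
      simp [mul_apply]
    · have hA1 : (Fintype.card A1 : ℂ) ≠ 0 := Nat.cast_ne_zero.mpr Fintype.card_ne_zero
      refine transpose_injective (smul_right_injective _ hA1 ?_)
      exact (h.margA0B0_superChoi hℰ.2).symm.trans (h'.margA0B0_superChoi hℰ'.2)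
  obtain ⟨U, hUK, hUU, hUU'⟩ := exists_unitary_mul_eq_of_conjTranspose_mul_self_eq hGram hK hcard'
  have hW'eq : W' = (U ⊗ₖ (1 : Matrix A0 A0 ℂ)) * W :=
    Dyn.reshape_injective (by rw [Dyn.reshape_kronecker_one_mul, hUK])
  have hℰeq := h.eq_comp_conjMap h' (isUnit_mul_conjTranspose_of_rank_eq_card hK) hUK
  have hU1 : (U ⊗ₖ (1 : Matrix A1 A1 ℂ)) * (U ⊗ₖ (1 : Matrix A1 A1 ℂ))ᴴ = 1 := by
    rw [conjTranspose_kronecker, ← mul_kronecker_mul, hUU', conjTranspose_one, Matrix.mul_one,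
      one_kronecker_one]
  refine ⟨hcard', U, hUU, hUU', fun ρ => ?_, fun σ => ?_⟩
  · rw [hW'eq, Dyn.conjMap_apply, Dyn.conjMap_apply, conjTranspose_mul]
    simp only [Matrix.mul_assoc]
  · rw [hℰeq, LinearMap.comp_apply, Dyn.conjMap_apply]
    simp only [← Matrix.mul_assoc, hU1, Matrix.one_mul]
    simp only [Matrix.mul_assoc, hU1, Matrix.mul_one]

/-- Uniqueness of the minimal realization of a superchannel. -/
theorem superchannel_realization_unique {A0 A1 B0 B1 E E' : Type*}
    [Fintype A0] [DecidableEq A0] [Fintype A1] [DecidableEq A1]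
    [Fintype B0] [DecidableEq B0] [Fintype B1] [DecidableEq B1]
    [Fintype E] [DecidableEq E] [Fintype E'] [DecidableEq E']
    (W : Matrix (E × A0) B0 ℂ) (hW : Wᴴ * W = 1)
    (W' : Matrix (E' × A0) B0 ℂ) (hW' : W'ᴴ * W' = 1)
    (ℰ : Matrix (E × A1) (E × A1) ℂ →ₗ[ℂ] Matrix B1 B1 ℂ) (hℰ : Dyn.IsChannel ℰ)
    (ℰ' : Matrix (E' × A1) (E' × A1) ℂ →ₗ[ℂ] Matrix B1 B1 ℂ) (hℰ' : Dyn.IsChannel ℰ')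
    (Θ : (Matrix A0 A0 ℂ →ₗ[ℂ] Matrix A1 A1 ℂ) → (Matrix B0 B0 ℂ →ₗ[ℂ] Matrix B1 B1 ℂ))
    (hreal : ∀ N, Θ N =
      ℰ ∘ₗ (Dyn.mapTensor (LinearMap.id (R := ℂ) (M := Matrix E E ℂ)) N) ∘ₗ Dyn.conjMap W)
    (hreal' : ∀ N, Θ N =
      ℰ' ∘ₗ (Dyn.mapTensor (LinearMap.id (R := ℂ) (M := Matrix E' E' ℂ)) N) ∘ₗ Dyn.conjMap W')
    (hcard : Fintype.card E = (Dyn.margA0B0 (Dyn.superChoi Θ)).rank)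
    (hle : Fintype.card E' ≤ Fintype.card E) :
    Fintype.card E' = Fintype.card E ∧
    ∃ U : Matrix E' E ℂ, Uᴴ * U = 1 ∧ U * Uᴴ = 1 ∧
      (∀ ρ : Matrix B0 B0 ℂ,
        Dyn.conjMap W' ρ =
          (U ⊗ₖ (1 : Matrix A0 A0 ℂ)) * (Dyn.conjMap W ρ) * (U ⊗ₖ (1 : Matrix A0 A0 ℂ))ᴴ) ∧
      (∀ σ : Matrix (E' × A1) (E' × A1) ℂ,
        ℰ' σ = ℰ ((U ⊗ₖ (1 : Matrix A1 A1 ℂ))ᴴ * σ * (U ⊗ₖ (1 : Matrix A1 A1 ℂ)))) :=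
  superchannel_realization_unique_general W W' ℰ hℰ ℰ' hℰ' Θ hreal hreal' hcard hle
end

section
/- If Θ is a superchannel from A to B, then its Choi matrix J^Θ_{AB} is positive semidefinite and its marginals satisfy J^Θ_{A1B0} = I_{A1B0} and J^Θ_{AB0} = J^Θ_{A0B0} ⊗ u_{A1}, where u_{A1} = I_{A1}/|A1| is the maximally mixed state. -/
open Matrix Kronecker BigOperators
open scoped ComplexOrder

/-!
For positivity, let `𝒩 : R0A0 → R1A1` be conjugation by `|φ⁺_{R1A1}⟩⟨φ⁺_{R0A0}|` (with
`R0 ≅ A0`, `R1 ≅ A1`); it is completely positive and its Choi matrix is `φ⁺ ⊗ φ⁺`. The Choi matrix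
of the completely positive map `(1 ⊗ Θ)[𝒩]` is then `J^Θ` up to a relabelling of indices, and Choi
matrices of completely positive maps are positive semidefinite.

For the marginals, a linear supermap taking trace-preserving maps to trace-preserving maps also
takes every `N` with `tr ∘ N = c • tr` to a map with the same property (apply it to
`N + (1 - c) T` with `T` trace preserving). Now `J_{A1B0}` comes from `Σ_i E^{iikl}`, which
scales the trace by `δ_kl`, and `|A1| J_{AB0} - δ_kl J_{A0B0} ⊗ I_{A1}` comes from
`|A1| E^{ijkl} - δ_kl Σ_k' E^{ijk'k'}`, which annihilates it.
-/

namespace Dyn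

open Matrix

section Entries

theorem choi_apply {A0 A1 : Type*} [DecidableEq A0] (N : Matrix A0 A0 ℂ →ₗ[ℂ] Matrix A1 A1 ℂ)
    (x y : A0) (u v : A1) : choi N (x, u) (y, v) = N (single x y 1) u v :=
  rfl

variable {A0 A1 B0 B1 : Type*}

theorem trace_elemMap [Fintype A1] [DecidableEq A1] (i j : A0) (k l : A1) (ρ : Matrix A0 A0 ℂ) :
    (elemMap i j k l ρ).trace = if k = l then ρ i j else 0 := by
  split_ifs with h
  · subst h; simp [elemMap]
  · simp [elemMap, h]

theorem elemMap_single_apply [DecidableEq A0] [DecidableEq A1] (i j x y : A0) (k l u v : A1) :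
    elemMap i j k l (single x y 1) u v = if x = i ∧ y = j ∧ k = u ∧ l = v then 1 else 0 := by
  simp only [elemMap, LinearMap.coe_mk, AddHom.coe_mk, Matrix.smul_apply, single_apply]
  split_ifs <;> simp_all

theorem mapTensor_single_apply [Fintype A0] [DecidableEq A0] [Fintype B0] [DecidableEq B0]
    (N : Matrix A0 A0 ℂ →ₗ[ℂ] Matrix A1 A1 ℂ) (M : Matrix B0 B0 ℂ →ₗ[ℂ] Matrix B1 B1 ℂ)
    (x y : A0) (m n : B0) (u v : A1) (r s : B1) :
    mapTensor N M (single (x, m) (y, n) 1) (u, r) (v, s)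
      = N (single x y 1) u v * M (single m n 1) r s := by
  simp only [mapTensor, LinearMap.coe_mk, AddHom.coe_mk, Matrix.sum_apply, Matrix.smul_apply,
    kroneckerMap_apply, single_apply, Prod.mk.injEq]
  simp [ite_and, Finset.sum_ite_eq]

theorem mapTensor_id_apply [Fintype A0] [DecidableEq A0] [Fintype B0] [DecidableEq B0]
    (M : Matrix B0 B0 ℂ →ₗ[ℂ] Matrix B1 B1 ℂ) (ρ : Matrix (A0 × B0) (A0 × B0) ℂ)
    (a b : A0) (u v : B1) :
    mapTensor LinearMap.id M ρ (a, u) (b, v) = M (of fun k l => ρ (a, k) (b, l)) u v := by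
  conv_rhs => rw [matrix_eq_sum_single (of fun k l => ρ (a, k) (b, l)), map_sum]
  simp only [mapTensor, LinearMap.coe_mk, AddHom.coe_mk, LinearMap.id_coe, id_eq, map_sum,
    Matrix.sum_apply, Matrix.smul_apply, kroneckerMap_apply, single_apply]
  simp [ite_and]
  refine Finset.sum_congr rfl fun k _ => Finset.sum_congr rfl fun l _ => ?_
  rw [show single k l (ρ (a, k) (b, l)) = ρ (a, k) (b, l) • single k l (1 : ℂ) by
    rw [smul_single, smul_eq_mul, mul_one], map_smul, Matrix.smul_apply, smul_eq_mul]

theorem margAB0_superChoi_apply [Fintype B1] [DecidableEq A1] [DecidableEq B0]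
    (Θ : (Matrix A0 A0 ℂ →ₗ[ℂ] Matrix A1 A1 ℂ) → (Matrix B0 B0 ℂ →ₗ[ℂ] Matrix B1 B1 ℂ))
    (i j : A0) (k l : A1) (m n : B0) :
    margAB0 (superChoi Θ) ((i, k), m) ((j, l), n) = (Θ (elemMap i j k l) (single m n 1)).trace :=
  rfl

theorem margA0B0_superChoi_apply [Fintype A1] [Fintype B1] [DecidableEq A1] [DecidableEq B0]
    (Θ : (Matrix A0 A0 ℂ →ₗ[ℂ] Matrix A1 A1 ℂ) → (Matrix B0 B0 ℂ →ₗ[ℂ] Matrix B1 B1 ℂ))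
    (i j : A0) (m n : B0) :
    margA0B0 (superChoi Θ) (i, m) (j, n)
      = ∑ k, (Θ (elemMap i j k k) (single m n 1)).trace :=
  rfl

theorem margA1B0_superChoi_apply [Fintype A0] [Fintype B1] [DecidableEq A1] [DecidableEq B0]
    (Θ : (Matrix A0 A0 ℂ →ₗ[ℂ] Matrix A1 A1 ℂ) → (Matrix B0 B0 ℂ →ₗ[ℂ] Matrix B1 B1 ℂ))
    (k l : A1) (m n : B0) :
    margA1B0 (superChoi Θ) (k, m) (l, n)
      = ∑ i, (Θ (elemMap i i k l) (single m n 1)).trace :=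
  rfl

end Entries

section CompletelyPositive

variable {E E' : Type*} [Fintype E] [DecidableEq E]

def entangledVec {R A : Type*} [DecidableEq A] (f : R → A) : R × A → ℂ :=
  fun p => if f p.1 = p.2 then 1 else 0

theorem IsCompletelyPositive.posSemidef_choi [Fintype E']
    {L : Matrix E E ℂ →ₗ[ℂ] Matrix E' E' ℂ} (hL : IsCompletelyPositive L) :
    (choi L).PosSemidef := by
  -- The ancillas of `IsCompletelyPositive` live in `Type`, so `E` is copied onto `Fin (card E)`.
  let e := (Fintype.equivFin E).symm
  have hΦ := hL _ _ (posSemidef_vecMulVec_self_star (entangledVec e))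
  convert hΦ.submatrix (fun p : E × E' => (e.symm p.1, p.2)) using 1
  ext ⟨a, u⟩ ⟨b, v⟩
  rw [submatrix_apply, mapTensor_id_apply]
  refine congrArg (fun X => L X u v) (ext fun k l => ?_)
  simp [entangledVec, vecMulVec_apply, single_apply, apply_ite (starRingEnd ℂ), ← ite_and,
    and_comm]

theorem isCompletelyPositive_conjMap [Fintype E'] (V : Matrix E' E ℂ) :
    IsCompletelyPositive (conjMap V) := by
  intro R _ _ ρ hρ
  suffices h : mapTensor LinearMap.id (conjMap V) ρ
      = ((1 : Matrix R R ℂ) ⊗ₖ V) * ρ * ((1 : Matrix R R ℂ) ⊗ₖ V)ᴴ from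
    h ▸ hρ.mul_mul_conjTranspose_same _
  ext ⟨a, u⟩ ⟨b, v⟩
  simp [mapTensor_id_apply, conjMap, mul_apply, one_apply, Fintype.sum_prod_type, ite_mul,
    apply_ite (starRingEnd ℂ), Finset.sum_ite_eq]

theorem choi_conjMap_apply (V : Matrix E' E ℂ) (p q : E × E') :
    choi (conjMap V) p q = V p.2 p.1 * star (V q.2 q.1) := by
  simp [choi, conjMap, mul_apply, single_apply, ite_and]

end CompletelyPositive

section Supermap

variable {A0 A1 B0 B1 : Type*} [Fintype A0] [DecidableEq A0] [Fintype A1] [DecidableEq A1]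
  [Fintype B0] [DecidableEq B0]

theorem idSupertensor_single_apply {R0 R1 : Type*} [Fintype R0] [DecidableEq R0] [Fintype R1]
    [DecidableEq R1]
    (Θ : (Matrix A0 A0 ℂ →ₗ[ℂ] Matrix A1 A1 ℂ) → (Matrix B0 B0 ℂ →ₗ[ℂ] Matrix B1 B1 ℂ))
    (𝒩 : Matrix (R0 × A0) (R0 × A0) ℂ →ₗ[ℂ] Matrix (R1 × A1) (R1 × A1) ℂ)
    (x y : R0) (m n : B0) (u v : R1) (r s : B1) :
    idSupertensor R0 R1 Θ 𝒩 (single (x, m) (y, n) 1) (u, r) (v, s)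
      = ∑ a0 : A0, ∑ b0 : A0, ∑ a1 : A1, ∑ b1 : A1,
          choi 𝒩 ((x, a0), (u, a1)) ((y, b0), (v, b1)) *
            Θ (elemMap a0 b0 a1 b1) (single m n 1) r s := by
  simp only [idSupertensor, LinearMap.sum_apply, LinearMap.smul_apply,
    Matrix.sum_apply, Matrix.smul_apply, mapTensor_single_apply, elemMap_single_apply]
  simp [ite_and, Finset.sum_ite_eq]

theorem superChoi_eq_submatrix_choi_idSupertensor {R0 R1 : Type*} [Fintype R0] [DecidableEq R0]
    [Fintype R1] [DecidableEq R1] (f0 : R0 ≃ A0) (f1 : R1 ≃ A1)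
    (Θ : (Matrix A0 A0 ℂ →ₗ[ℂ] Matrix A1 A1 ℂ) → (Matrix B0 B0 ℂ →ₗ[ℂ] Matrix B1 B1 ℂ)) :
    superChoi Θ = (choi (idSupertensor R0 R1 Θ
      (conjMap (vecMulVec (entangledVec f1) (entangledVec f0))))).submatrix
        (fun p => ((f0.symm p.1.1, p.2.1), (f1.symm p.1.2, p.2.2)))
        (fun p => ((f0.symm p.1.1, p.2.1), (f1.symm p.1.2, p.2.2))) := by
  ext ⟨⟨i, k⟩, m, r⟩ ⟨⟨j, l⟩, n, s⟩
  simp only [superChoi, submatrix_apply, of_apply]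
  rw [choi_apply, choi_apply, idSupertensor_single_apply]
  simp [choi_conjMap_apply, entangledVec, vecMulVec_apply, apply_ite (starRingEnd ℂ)]

theorem IsSuperchannel.posSemidef_superChoi [Fintype B1]
    {Θ : (Matrix A0 A0 ℂ →ₗ[ℂ] Matrix A1 A1 ℂ) → (Matrix B0 B0 ℂ →ₗ[ℂ] Matrix B1 B1 ℂ)}
    (hΘ : IsSuperchannel Θ) : (superChoi Θ).PosSemidef := by
  rw [superChoi_eq_submatrix_choi_idSupertensor (Fintype.equivFin A0).symm
    (Fintype.equivFin A1).symm Θ]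
  exact (hΘ.2.2 _ _ _ (isCompletelyPositive_conjMap _)).posSemidef_choi.submatrix _

theorem IsSuperchannel.isLinearMap [Fintype B1]
    {Θ : (Matrix A0 A0 ℂ →ₗ[ℂ] Matrix A1 A1 ℂ) → (Matrix B0 B0 ℂ →ₗ[ℂ] Matrix B1 B1 ℂ)}
    (hΘ : IsSuperchannel Θ) : IsLinearMap ℂ Θ := by
  have map_zero : Θ 0 = 0 := by simpa using hΘ.1 1 0 0
  exact ⟨fun N M => by simpa using hΘ.1 1 N M, fun c N => by simpa [map_zero] using hΘ.1 c N 0⟩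

end Supermap

section TracePreserving

theorem isTracePreserving_traceLinearMap_smulRight {A0 A1 : Type*} [Fintype A0] [Fintype A1]
    [DecidableEq A1] (k : A1) :
    IsTracePreserving ((traceLinearMap A0 ℂ ℂ).smulRight (single k k 1)) := fun ρ => by
  simp

variable {A0 A1 B0 B1 : Type*} [Fintype A0] [Fintype A1] [Fintype B0] [Fintype B1]
  (Φ : (Matrix A0 A0 ℂ →ₗ[ℂ] Matrix A1 A1 ℂ) →ₗ[ℂ] (Matrix B0 B0 ℂ →ₗ[ℂ] Matrix B1 B1 ℂ))
  (hΦ : ∀ N, IsTracePreserving N → IsTracePreserving (Φ N))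
include hΦ

theorem trace_apply_eq_mul_trace_of_isTracePreserving {T : Matrix A0 A0 ℂ →ₗ[ℂ] Matrix A1 A1 ℂ}
    (hT : IsTracePreserving T) {N : Matrix A0 A0 ℂ →ₗ[ℂ] Matrix A1 A1 ℂ} {c : ℂ}
    (hN : ∀ ρ, (N ρ).trace = c * ρ.trace) (σ : Matrix B0 B0 ℂ) :
    (Φ N σ).trace = c * σ.trace := by
  have hTP : IsTracePreserving (N + (1 - c) • T) := fun ρ => by
    simp only [LinearMap.add_apply, LinearMap.smul_apply, trace_add, trace_smul, hN, hT ρ]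
    ring
  have h := hΦ _ hTP σ
  rw [map_add, map_smul, LinearMap.add_apply, LinearMap.smul_apply, trace_add, trace_smul,
    hΦ T hT σ, smul_eq_mul] at h
  linear_combination h

variable [DecidableEq A1] [DecidableEq B0]

theorem margA1B0_superChoi_eq_one : margA1B0 (superChoi Φ) = 1 := by
  ext ⟨k, m⟩ ⟨l, n⟩
  have hN : ∀ ρ : Matrix A0 A0 ℂ,
      ((∑ i, elemMap i i k l) ρ).trace = (if k = l then 1 else 0) * ρ.trace := fun ρ => by
    simp only [LinearMap.coe_sum, Finset.sum_apply, trace_sum, trace_elemMap]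
    split_ifs <;> simp [trace]
  calc margA1B0 (superChoi Φ) (k, m) (l, n)
      = (Φ (∑ i, elemMap i i k l) (single m n 1)).trace := by
        simp [margA1B0_superChoi_apply, map_sum, LinearMap.sum_apply, trace_sum]
    _ = (if k = l then 1 else 0) * (single m n 1).trace :=
        trace_apply_eq_mul_trace_of_isTracePreserving Φ hΦ
          (isTracePreserving_traceLinearMap_smulRight k) hN _
    _ = (1 : Matrix (A1 × B0) (A1 × B0) ℂ) (k, m) (l, n) := by
        by_cases hmn : m = n
        · subst hmn; simp [one_apply]
        · simp [one_apply, hmn]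

theorem margAB0_superChoi_eq_mul (i j : A0) (k l : A1) (m n : B0) :
    margAB0 (superChoi Φ) ((i, k), m) ((j, l), n)
      = margA0B0 (superChoi Φ) (i, m) (j, n) *
          (if k = l then (1 : ℂ) / (Fintype.card A1 : ℂ) else 0) := by
  have : Nonempty A1 := ⟨k⟩
  have hcard : (Fintype.card A1 : ℂ) ≠ 0 := by simp
  let N := (Fintype.card A1 : ℂ) • elemMap i j k l
    - (if k = l then (1 : ℂ) else 0) • ∑ k', elemMap i j k' k'
  have hN : ∀ ρ : Matrix A0 A0 ℂ, (N ρ).trace = 0 * ρ.trace := fun ρ => by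
    simp only [N, LinearMap.sub_apply, LinearMap.smul_apply, LinearMap.coe_sum, Finset.sum_apply,
      trace_sub, trace_smul, trace_sum, trace_elemMap]
    split_ifs <;> simp
  have h := trace_apply_eq_mul_trace_of_isTracePreserving Φ hΦ
    (isTracePreserving_traceLinearMap_smulRight k) hN (single m n 1)
  rw [map_sub, map_smul, map_smul, map_sum] at h
  simp only [LinearMap.sub_apply, LinearMap.smul_apply, LinearMap.coe_sum, Finset.sum_apply,
    trace_sub, trace_smul, trace_sum, smul_eq_mul, zero_mul, sub_eq_zero] at h
  rw [margAB0_superChoi_apply, margA0B0_superChoi_apply]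
  split_ifs at h ⊢
  · field_simp
    linear_combination h
  · simpa [hcard] using h

end TracePreserving

end Dyn

theorem superchannel_choi_marginals_general {A0 A1 B0 B1 : Type*}
    [Fintype A0] [DecidableEq A0] [Fintype A1] [DecidableEq A1]
    [Fintype B0] [DecidableEq B0] [Fintype B1]
    (Θ : (Matrix A0 A0 ℂ →ₗ[ℂ] Matrix A1 A1 ℂ) → (Matrix B0 B0 ℂ →ₗ[ℂ] Matrix B1 B1 ℂ))
    (hΘ : Dyn.IsSuperchannel Θ) :
    (Dyn.superChoi Θ).PosSemidef ∧
    Dyn.margA1B0 (Dyn.superChoi Θ) = 1 ∧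
    ∀ (i j : A0) (k l : A1) (m n : B0),
      Dyn.margAB0 (Dyn.superChoi Θ) ((i, k), m) ((j, l), n)
        = Dyn.margA0B0 (Dyn.superChoi Θ) (i, m) (j, n) *
            (if k = l then (1 : ℂ) / (Fintype.card A1 : ℂ) else 0) := by
  let Φ := IsLinearMap.mk' Θ hΘ.isLinearMap
  exact ⟨hΘ.posSemidef_superChoi, Dyn.margA1B0_superChoi_eq_one Φ hΘ.2.1,
    Dyn.margAB0_superChoi_eq_mul Φ hΘ.2.1⟩

/-- the Choi matrix of a superchannel is PSD and has the marginals
`J_{A1B0} = I` and `J_{AB0} = J_{A0B0} ⊗ u_{A1}`. -/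
theorem superchannel_choi_marginals {A0 A1 B0 B1 : Type*}
    [Fintype A0] [DecidableEq A0] [Fintype A1] [DecidableEq A1]
    [Fintype B0] [DecidableEq B0] [Fintype B1] [DecidableEq B1]
    (Θ : (Matrix A0 A0 ℂ →ₗ[ℂ] Matrix A1 A1 ℂ) → (Matrix B0 B0 ℂ →ₗ[ℂ] Matrix B1 B1 ℂ))
    (hΘ : Dyn.IsSuperchannel Θ) :
    (Dyn.superChoi Θ).PosSemidef ∧
    Dyn.margA1B0 (Dyn.superChoi Θ) = 1 ∧
    ∀ (i j : A0) (k l : A1) (m n : B0),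
      Dyn.margAB0 (Dyn.superChoi Θ) ((i, k), m) ((j, l), n)
        = Dyn.margA0B0 (Dyn.superChoi Θ) (i, m) (j, n) *
            (if k = l then (1 : ℂ) / (Fintype.card A1 : ℂ) else 0) :=
  superchannel_choi_marginals_general Θ hΘ
end

section
/- For a Hermitian-preserving map P from B0 to B1 and sufficiently small ε > 0, the matrix J := (1−ε) I_{B0} ⊗ u_{B1} + ε(J^P + (I_{B0} − J^P_{B0}) ⊗ u_{B1}) is positive semidefinite and satisfies the partial-trace condition tr_{B1}[J] = I_{B0}, so J is the Choi matrix of a quantum channel; moreover for every channel M, tr[J J^M] = ε tr[J^P J^M] + c^P where c^P = (|B0| − ε tr[J^P])/|B1| depends only on P. -/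
open Matrix Kronecker BigOperators
open scoped ComplexOrder

/-!
Write `c = |B1|` and `T = tr_{B1} J^P`. Then `J = c⁻¹ I + ε (J^P - T ⊗ u)`, and the perturbation
`J^P - T ⊗ u` is Hermitian, because a Hermitian-preserving map commutes with the adjoint. Hence `J`
is positive semidefinite once `ε ‖J^P - T ⊗ u‖ ≤ c⁻¹`, while `tr_{B1} (T ⊗ u) = T` gives
`tr_{B1} J = I`. The map with Choi matrix `J` is completely positive because `(id_R ⊗ ·)` of it
sends `ρ` to a compression `V† (ρ ⊗ J) V`. Finally `tr[(X ⊗ u) J^M] = c⁻¹ tr X` whenever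
`tr_{B1} J^M = I`, which makes `tr[J J^M]` affine in `tr[J^P J^M]`.
-/

open scoped ComplexStarModule in
theorem LinearMap.map_star_of_map_isSelfAdjoint {A B : Type*} [AddCommGroup A] [Module ℂ A]
    [StarAddMonoid A] [StarModule ℂ A] [AddCommGroup B] [Module ℂ B] [StarAddMonoid B]
    [StarModule ℂ B] (f : A →ₗ[ℂ] B) (hf : ∀ a, IsSelfAdjoint a → IsSelfAdjoint (f a)) (a : A) :
    f (star a) = star (f a) := by
  have hre := hf _ (ℜ a).2
  have him := hf _ (ℑ a).2
  rw [← realPart_add_I_smul_imaginaryPart a]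
  simp [star_add, star_smul, hre.star_eq, him.star_eq, (ℜ a).2.star_eq, (ℑ a).2.star_eq]

open scoped MatrixOrder Matrix.Norms.L2Operator in
theorem Matrix.IsHermitian.exists_posSemidef_smul_one_add_smul {n : Type*} [Fintype n]
    [DecidableEq n] {H : Matrix n n ℂ} (hH : H.IsHermitian) {a : ℝ} (ha : 0 < a) :
    ∃ ε0 : ℝ, 0 < ε0 ∧ ∀ ε : ℝ, 0 ≤ ε → ε ≤ ε0 →
      ((a : ℂ) • (1 : Matrix n n ℂ) + (ε : ℂ) • H).PosSemidef := by
  have hbound : ((‖H‖ : ℂ) • 1 + H).PosSemidef := by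
    have := hH.isSelfAdjoint.neg_algebraMap_norm_le_self
    rw [Matrix.le_iff, Algebra.algebraMap_eq_smul_one, sub_neg_eq_add] at this
    simpa [Complex.coe_smul, add_comm] using this
  refine ⟨a / (‖H‖ + 1), by positivity, fun ε hε hεle => ?_⟩
  have hsmall : 0 ≤ a - ε * ‖H‖ := by
    rw [le_div_iff₀ (by positivity)] at hεle
    nlinarith [norm_nonneg H]
  have hsplit : (a : ℂ) • (1 : Matrix n n ℂ) + (ε : ℂ) • H
      = ((a - ε * ‖H‖ : ℝ) : ℂ) • 1 + (ε : ℂ) • ((‖H‖ : ℂ) • 1 + H) := by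
    push_cast; module
  rw [hsplit]
  exact (PosSemidef.one.smul (by exact_mod_cast hsmall)).add
    (hbound.smul (by exact_mod_cast hε))

theorem Matrix.sub_kronecker {l m n p α : Type*} [Ring α] (A B : Matrix l m α)
    (C : Matrix n p α) : (A - B) ⊗ₖ C = A ⊗ₖ C - B ⊗ₖ C := by
  ext
  simp [sub_mul]

theorem Matrix.IsHermitian.kronecker {m n α : Type*} [CommRing α] [StarRing α]
    {A : Matrix m m α} {B : Matrix n n α} (hA : A.IsHermitian) (hB : B.IsHermitian) :
    (A ⊗ₖ B).IsHermitian := by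
  rw [IsHermitian, conjTranspose_kronecker, hA.eq, hB.eq]

namespace Dyn

section PartialTrace

variable {R S : Type*} [Fintype S]

theorem ptraceSnd_add (X Y : Matrix (R × S) (R × S) ℂ) :
    ptraceSnd (X + Y) = ptraceSnd X + ptraceSnd Y := by
  ext
  simp [ptraceSnd, Finset.sum_add_distrib]

theorem ptraceSnd_smul (c : ℂ) (X : Matrix (R × S) (R × S) ℂ) :
    ptraceSnd (c • X) = c • ptraceSnd X := by
  ext
  simp [ptraceSnd, Finset.mul_sum]

theorem ptraceSnd_kronecker (A : Matrix R R ℂ) (B : Matrix S S ℂ) :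
    ptraceSnd (A ⊗ₖ B) = B.trace • A := by
  ext
  simp [ptraceSnd, trace, Finset.mul_sum, mul_comm]

theorem ptraceSnd_isHermitian {X : Matrix (R × S) (R × S) ℂ} (hX : X.IsHermitian) :
    (ptraceSnd X).IsHermitian := by
  ext i j
  simp only [conjTranspose_apply, ptraceSnd, of_apply, star_sum]
  exact Finset.sum_congr rfl fun s _ => hX.apply (i, s) (j, s)

theorem trace_ptraceSnd [Fintype R] (X : Matrix (R × S) (R × S) ℂ) :
    (ptraceSnd X).trace = X.trace :=
  (Fintype.sum_prod_type fun p => X p p).symm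

theorem trace_kronecker_one_mul [Fintype R] [DecidableEq S] (A : Matrix R R ℂ)
    (X : Matrix (R × S) (R × S) ℂ) :
    ((A ⊗ₖ (1 : Matrix S S ℂ)) * X).trace = (A * ptraceSnd X).trace := by
  simp [trace, mul_apply, ptraceSnd, one_apply, Fintype.sum_prod_type, Finset.mul_sum]
  exact Finset.sum_congr rfl fun _ _ => Finset.sum_comm

theorem trace_kronecker_smul_one_mul_of_ptraceSnd_eq_one [Fintype R] [DecidableEq R]
    [DecidableEq S] {X : Matrix (R × S) (R × S) ℂ} (hX : ptraceSnd X = 1) (A : Matrix R R ℂ)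
    (c : ℂ) : ((A ⊗ₖ (c • (1 : Matrix S S ℂ))) * X).trace = c * A.trace := by
  rw [kronecker_smul, smul_mul, trace_smul, trace_kronecker_one_mul, hX, mul_one, smul_eq_mul]

end PartialTrace

section Choi

variable {B0 B1 : Type*} [DecidableEq B0]

theorem choi_isHermitian {N : Matrix B0 B0 ℂ →ₗ[ℂ] Matrix B1 B1 ℂ}
    (hN : ∀ ρ : Matrix B0 B0 ℂ, ρ.IsHermitian → (N ρ).IsHermitian) : (choi N).IsHermitian := by
  ext p q
  have := congr_fun₂ (N.map_star_of_map_isSelfAdjoint hN (single q.1 p.1 1)) p.2 q.2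
  simpa [choi, star_eq_conjTranspose, conjTranspose_single] using this.symm

theorem mapOfChoi_single_apply [Fintype B0] (C : Matrix (B0 × B1) (B0 × B1) ℂ) (k l : B0)
    (p q : B1) :
    mapOfChoi C (single k l 1) p q = C (k, p) (l, q) := by
  simp [mapOfChoi, single_apply, ite_and]

theorem choi_mapOfChoi [Fintype B0] (C : Matrix (B0 × B1) (B0 × B1) ℂ) :
    choi (mapOfChoi C) = C := by
  ext p q
  exact mapOfChoi_single_apply C _ _ _ _

theorem ptraceSnd_choi_apply [Fintype B1] (N : Matrix B0 B0 ℂ →ₗ[ℂ] Matrix B1 B1 ℂ) (i j : B0) :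
    ptraceSnd (choi N) i j = (N (single i j 1)).trace := rfl

theorem isTracePreserving_iff_ptraceSnd_choi_eq_one [Fintype B0] [Fintype B1]
    (N : Matrix B0 B0 ℂ →ₗ[ℂ] Matrix B1 B1 ℂ) :
    IsTracePreserving N ↔ ptraceSnd (choi N) = 1 := by
  constructor
  · intro hN
    ext i j
    rw [ptraceSnd_choi_apply, hN, one_apply]
    split_ifs with h
    · rw [h, trace_single_eq_same]
    · exact trace_single_eq_of_ne _ _ _ h
  · intro hN ρ
    have hsingle : ∀ i j, (N (single i j 1)).trace = (1 : Matrix B0 B0 ℂ) i j := fun i j => by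
      rw [← ptraceSnd_choi_apply, hN]
    have hρ : ∀ i j, single i j (ρ i j) = ρ i j • single i j 1 := by simp
    conv_lhs => rw [matrix_eq_sum_single ρ]
    simp only [hρ, map_sum, map_smul, trace_sum, trace_smul, hsingle, smul_eq_mul, one_apply,
      mul_ite, mul_one, mul_zero, Finset.sum_ite_eq, Finset.mem_univ, if_true]
    rfl

theorem mapTensor_id_mapOfChoi_apply [Fintype B0] {R : Type*} [Fintype R] [DecidableEq R]
    (C : Matrix (B0 × B1) (B0 × B1) ℂ) (ρ : Matrix (R × B0) (R × B0) ℂ) (r r' : R) (p q : B1) :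
    mapTensor LinearMap.id (mapOfChoi C) ρ (r, p) (r', q)
      = ∑ k : B0, ∑ l : B0, ρ (r, k) (r', l) * C (k, p) (l, q) := by
  simp [mapTensor, Matrix.sum_apply, mapOfChoi_single_apply, single_apply, ite_and]

theorem isCompletelyPositive_mapOfChoi [Fintype B0] [Fintype B1]
    {C : Matrix (B0 × B1) (B0 × B1) ℂ} (hC : C.PosSemidef) :
    IsCompletelyPositive (mapOfChoi C) := by
  classical
  intro R _ _ ρ hρ
  let V : Matrix ((R × B0) × (B0 × B1)) (R × B1) ℂ :=
    of fun x y => if x.1.1 = y.1 ∧ x.1.2 = x.2.1 ∧ x.2.2 = y.2 then 1 else 0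
  have hcompression : mapTensor LinearMap.id (mapOfChoi C) ρ = Vᴴ * (ρ ⊗ₖ C) * V := by
    ext ⟨r, p⟩ ⟨r', q⟩
    rw [mapTensor_id_mapOfChoi_apply]
    simp [V, mul_apply, Fintype.sum_prod_type, ite_and, apply_ite (starRingEnd ℂ), ite_mul]
    exact Finset.sum_comm
  rw [hcompression]
  exact (hρ.kronecker hC).conjTranspose_mul_mul_same V

end Choi

end Dyn

open Dyn in
/-- for small `ε > 0`, `J = (1−ε) I ⊗ u + ε(J^P + (I − J^P_{B0}) ⊗ u)` is the
Choi matrix of a channel, and `tr[J J^M] = ε tr[J^P J^M] + c^P` for every channel `M`. -/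
theorem perturbed_choi_channel {B0 B1 : Type*}
    [Fintype B0] [DecidableEq B0] [Fintype B1] [DecidableEq B1] [Nonempty B1]
    (P : Matrix B0 B0 ℂ →ₗ[ℂ] Matrix B1 B1 ℂ)
    (hP : ∀ ρ : Matrix B0 B0 ℂ, ρ.IsHermitian → (P ρ).IsHermitian) :
    ∃ ε0 : ℝ, 0 < ε0 ∧ ∀ ε : ℝ, 0 < ε → ε ≤ ε0 →
      let u : Matrix B1 B1 ℂ := ((Fintype.card B1 : ℂ))⁻¹ • 1
      let J : Matrix (B0 × B1) (B0 × B1) ℂ :=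
        (((1 - ε : ℝ) : ℂ)) • ((1 : Matrix B0 B0 ℂ) ⊗ₖ u) +
          ((ε : ℝ) : ℂ) • (Dyn.choi P +
            ((1 : Matrix B0 B0 ℂ) - Dyn.ptraceSnd (Dyn.choi P)) ⊗ₖ u)
      J.PosSemidef ∧
      Dyn.ptraceSnd J = 1 ∧
      (∃ Q : Matrix B0 B0 ℂ →ₗ[ℂ] Matrix B1 B1 ℂ, Dyn.IsChannel Q ∧ Dyn.choi Q = J) ∧
      ∀ M : Matrix B0 B0 ℂ →ₗ[ℂ] Matrix B1 B1 ℂ, Dyn.IsChannel M →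
        Matrix.trace (J * Dyn.choi M)
          = ((ε : ℝ) : ℂ) * Matrix.trace (Dyn.choi P * Dyn.choi M) +
            ((Fintype.card B0 : ℂ) - ((ε : ℝ) : ℂ) * Matrix.trace (Dyn.choi P)) /
              (Fintype.card B1 : ℂ) := by
  have hcard : (Fintype.card B1 : ℂ) ≠ 0 := by exact_mod_cast Fintype.card_ne_zero
  set u : Matrix B1 B1 ℂ := ((Fintype.card B1 : ℂ))⁻¹ • 1 with hu
  have htrace_u : u.trace = 1 := by simp [u, hcard]
  have hH : (choi P - ptraceSnd (choi P) ⊗ₖ u).IsHermitian :=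
    (choi_isHermitian hP).sub <| (ptraceSnd_isHermitian (choi_isHermitian hP)).kronecker <|
      isHermitian_one.smul (by simp [IsSelfAdjoint])
  obtain ⟨ε0, hε0, hpsd⟩ :=
    hH.exists_posSemidef_smul_one_add_smul (a := (Fintype.card B1 : ℝ)⁻¹) (by positivity)
  refine ⟨ε0, hε0, fun ε hε hεle => ?_⟩
  intro u' J
  have hJ : J = (((Fintype.card B1 : ℝ)⁻¹ : ℝ) : ℂ) • 1
      + (ε : ℂ) • (choi P - ptraceSnd (choi P) ⊗ₖ u) := by
    simp only [J, u', sub_kronecker, hu, kronecker_smul, one_kronecker_one]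
    push_cast
    module
  have hJ_psd : J.PosSemidef := hJ ▸ hpsd ε hε.le hεle
  have hJ_ptrace : ptraceSnd J = 1 := by
    simp only [J, u', ptraceSnd_add, ptraceSnd_smul, ptraceSnd_kronecker, htrace_u, one_smul,
      add_sub_cancel, ← add_smul]
    simp
  refine ⟨hJ_psd, hJ_ptrace, ⟨mapOfChoi J, ⟨isCompletelyPositive_mapOfChoi hJ_psd, ?_⟩,
    choi_mapOfChoi J⟩, fun M hM => ?_⟩
  · rw [isTracePreserving_iff_ptraceSnd_choi_eq_one, choi_mapOfChoi, hJ_ptrace]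
  have hM : ptraceSnd (choi M) = 1 := (isTracePreserving_iff_ptraceSnd_choi_eq_one M).1 hM.2
  simp only [J, u', hu, add_mul, smul_mul, trace_add, trace_smul,
    trace_kronecker_smul_one_mul_of_ptraceSnd_eq_one hM, trace_sub,
    trace_one, trace_ptraceSnd, smul_eq_mul]
  push_cast
  field_simp
  ring
end
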